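/- arXiv:1812.10250 — 9 statements merged into one kernel-verified Lean document; each statement's English description precedes it below -/
import Mathlib

section
/- For every ε > 0, f ∈ V* and g ∈ Q*, there exists a unique pair (u, p) ∈ V × Q solving the ε-Stokes system ES(ε), i.e. satisfying ⟨u,φ⟩_V + b(φ,p) = f(φ) for all φ ∈ V and ε·⟨p,ψ⟩_Q − b(u,ψ) = ε·g(ψ) for all ψ ∈ Q. (Abstract form of Theorem 2.7: well-posedness of the ε-Stokes problem.) -/
/-!
Testing the system with the solution itself gives the energy identity
`‖u‖² + ε‖p‖² = f u + ε g p`, so the homogeneous system has only the trivial solution.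
For existence, eliminate the velocity: with `R` the Riesz map of `V` and `T : Q → V` the
Riesz representative of `p ↦ b(·, p)`, the first equation reads `u = R f - T p`, and the
second becomes `ε⟨p, ψ⟩ + b(T p, ψ) = ε g ψ + b(R f, ψ)`. Since `b(T p, p) = ‖T p‖² ≥ 0`, this Schur
complement form is coercive and Lax–Milgram provides `p`.
-/

open scoped RealInnerProductSpace

open InnerProductSpace

section

variable {V Q : Type*}
  [NormedAddCommGroup V] [InnerProductSpace ℝ V]
  [NormedAddCommGroup Q] [InnerProductSpace ℝ Q]

theorem IsCoercive.exists_eq [CompleteSpace Q] {a : Q →L[ℝ] Q →L[ℝ] ℝ} (ha : IsCoercive a)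
    (L : Q →L[ℝ] ℝ) : ∃ p, a p = L := by
  refine ⟨ha.continuousLinearEquivOfBilin.symm ((toDual ℝ Q).symm L), ?_⟩
  ext ψ
  rw [← ha.continuousLinearEquivOfBilin_apply, ContinuousLinearEquiv.apply_symm_apply,
    toDual_symm_apply]

theorem exists_smul_inner_add_eq [CompleteSpace Q] {ε : ℝ} (hε : 0 < ε)
    {c : Q →L[ℝ] Q →L[ℝ] ℝ} (hc : ∀ p, 0 ≤ c p p) (L : Q →L[ℝ] ℝ) :
    ∃ p, ∀ ψ, ε * ⟪p, ψ⟫ + c p ψ = L ψ := by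
  -- `innerSL ℝ` is typed as conjugate-linear, so it cannot be added to `c` without this cast.
  set J : Q →L[ℝ] Q →L[ℝ] ℝ := innerSL ℝ
  have hJ : ∀ p ψ, J p ψ = ⟪p, ψ⟫ := fun _ _ => rfl
  have hcoer : IsCoercive (ε • J + c) := by
    refine ⟨ε, hε, fun p => ?_⟩
    have := hc p
    rw [add_apply, smul_apply, add_apply, smul_apply, hJ, smul_eq_mul,
      real_inner_self_eq_norm_mul_norm]
    nlinarith
  obtain ⟨p, hp⟩ := hcoer.exists_eq L
  refine ⟨p, fun ψ => ?_⟩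
  rw [← hp, add_apply, smul_apply, add_apply, smul_apply, hJ, smul_eq_mul]

noncomputable def rieszFlip [CompleteSpace V] (b : V →L[ℝ] Q →L[ℝ] ℝ) : Q →L[ℝ] V :=
  (toDual ℝ V).symm.toContinuousLinearEquiv.toContinuousLinearMap ∘L b.flip

@[simp]
theorem inner_rieszFlip_apply [CompleteSpace V] (b : V →L[ℝ] Q →L[ℝ] ℝ) (p : Q) (φ : V) :
    ⟪rieszFlip b p, φ⟫ = b φ p :=
  toDual_symm_apply

def IsEpsStokesSolution (b : V →L[ℝ] Q →L[ℝ] ℝ) (ε : ℝ) (f : V →L[ℝ] ℝ) (g : Q →L[ℝ] ℝ)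
    (up : V × Q) : Prop :=
  (∀ φ : V, ⟪up.1, φ⟫ + b φ up.2 = f φ) ∧ (∀ ψ : Q, ε * ⟪up.2, ψ⟫ - b up.1 ψ = ε * g ψ)

namespace IsEpsStokesSolution

variable {b : V →L[ℝ] Q →L[ℝ] ℝ} {ε : ℝ}

theorem sub {f f' : V →L[ℝ] ℝ} {g g' : Q →L[ℝ] ℝ} {up up' : V × Q}
    (h : IsEpsStokesSolution b ε f g up) (h' : IsEpsStokesSolution b ε f' g' up') :
    IsEpsStokesSolution b ε (f - f') (g - g') (up - up') := by
  constructor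
  · intro φ
    simp only [Prod.fst_sub, Prod.snd_sub, inner_sub_left, map_sub, sub_apply]
    linarith [h.1 φ, h'.1 φ]
  · intro ψ
    simp only [Prod.fst_sub, Prod.snd_sub, inner_sub_left, map_sub, sub_apply]
    linarith [h.2 ψ, h'.2 ψ]

theorem eq_zero (hε : 0 < ε) {up : V × Q} (h : IsEpsStokesSolution b ε 0 0 up) : up = 0 := by
  have energy : ⟪up.1, up.1⟫ + ε * ⟪up.2, up.2⟫ = 0 := by
    have h₁ := h.1 up.1
    have h₂ := h.2 up.2
    simp only [zero_apply, mul_zero] at h₁ h₂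
    linarith
  obtain ⟨hu, hp⟩ := (add_eq_zero_iff_of_nonneg real_inner_self_nonneg
    (mul_nonneg hε.le real_inner_self_nonneg)).mp energy
  exact Prod.ext (inner_self_eq_zero.mp hu)
    (inner_self_eq_zero.mp ((mul_eq_zero.mp hp).resolve_left hε.ne'))

theorem unique (hε : 0 < ε) {f : V →L[ℝ] ℝ} {g : Q →L[ℝ] ℝ} {up up' : V × Q}
    (h : IsEpsStokesSolution b ε f g up) (h' : IsEpsStokesSolution b ε f g up') : up = up' :=
  sub_eq_zero.mp (eq_zero hε (by simpa only [sub_self] using h.sub h'))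

theorem exists_of_pos [CompleteSpace V] [CompleteSpace Q] (hε : 0 < ε) (f : V →L[ℝ] ℝ)
    (g : Q →L[ℝ] ℝ) : ∃ up, IsEpsStokesSolution b ε f g up := by
  set T := rieszFlip b
  set u₀ := (toDual ℝ V).symm f
  have hpos : ∀ p, 0 ≤ b.comp T p p := fun p => by
    rw [ContinuousLinearMap.comp_apply, ← inner_rieszFlip_apply]
    exact real_inner_self_nonneg
  obtain ⟨p, hp⟩ := exists_smul_inner_add_eq hε hpos (ε • g + b u₀)
  refine ⟨(u₀ - T p, p), fun φ => ?_, fun ψ => ?_⟩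
  · simp [u₀, T, inner_sub_left, toDual_symm_apply]
  · have := hp ψ
    simp only [ContinuousLinearMap.comp_apply, add_apply, smul_apply, smul_eq_mul] at this
    simp only [map_sub, sub_apply]
    linarith

end IsEpsStokesSolution

end

/-- Abstract form of Theorem 2.7: well-posedness of the ε-Stokes problem ES(ε). -/
theorem epsStokes_wellPosed {V Q : Type*}
    [NormedAddCommGroup V] [InnerProductSpace ℝ V] [CompleteSpace V]
    [NormedAddCommGroup Q] [InnerProductSpace ℝ Q] [CompleteSpace Q]
    (b : V →L[ℝ] Q →L[ℝ] ℝ)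
    (ε : ℝ) (hε : 0 < ε) (f : V →L[ℝ] ℝ) (g : Q →L[ℝ] ℝ) :
    ∃! up : V × Q,
      (∀ φ : V, ⟪up.1, φ⟫ + b φ up.2 = f φ) ∧
      (∀ ψ : Q, ε * ⟪up.2, ψ⟫ - b up.1 ψ = ε * g ψ) := by
  obtain ⟨up, hup⟩ := IsEpsStokesSolution.exists_of_pos (b := b) hε f g
  exact ⟨up, hup, fun _ h => IsEpsStokesSolution.unique hε h hup⟩
end

section
/- Let ε > 0, h ∈ Q*, and suppose (v, q) ∈ V × Q satisfies ⟨v,φ⟩_V + b(φ,q) = 0 for all φ ∈ V and ε·⟨q,ψ⟩_Q − b(v,ψ) = h(ψ) for all ψ ∈ Q. Then ‖q‖_Q ≤ (1/ε)·‖h‖_{Q*} and ‖v‖_V ≤ (‖b‖/ε)·‖h‖_{Q*}. (Abstract form of Lemma 3.1.) -/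
/-! Testing the first equation with `φ = v` and the second with `ψ = q` gives the energy identity
`ε ‖q‖² + ‖v‖² = h q ≤ ‖h‖ ‖q‖`, hence `ε ‖q‖ ≤ ‖h‖`. The first equation alone gives
`‖v‖² = -b v q ≤ ‖b‖ ‖v‖ ‖q‖`, hence `‖v‖ ≤ ‖b‖ ‖q‖`. -/

open scoped RealInnerProductSpace

lemma mul_le_of_mul_sq_le_mul {a x c : ℝ} (ha : 0 ≤ a) (hc : 0 ≤ c) (h : a * x ^ 2 ≤ c * x) :
    a * x ≤ c := by
  nlinarith

section EpsStokes

variable {V Q : Type*} [NormedAddCommGroup V] [InnerProductSpace ℝ V]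
  [NormedAddCommGroup Q] [InnerProductSpace ℝ Q]
  {b : V →L[ℝ] Q →L[ℝ] ℝ} {v : V} {q : Q}

lemma norm_sq_eq_neg_apply_of_inner_add_eq_zero (h1 : ∀ φ : V, ⟪v, φ⟫ + b φ q = 0) :
    ‖v‖ ^ 2 = -b v q := by
  rw [← real_inner_self_eq_norm_sq]
  linarith [h1 v]

lemma norm_le_opNorm_mul_norm_of_inner_add_eq_zero (h1 : ∀ φ : V, ⟪v, φ⟫ + b φ q = 0) :
    ‖v‖ ≤ ‖b‖ * ‖q‖ := by
  have h_sq : 1 * ‖v‖ ^ 2 ≤ ‖b‖ * ‖q‖ * ‖v‖ :=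
    calc 1 * ‖v‖ ^ 2 = -b v q := by rw [one_mul, norm_sq_eq_neg_apply_of_inner_add_eq_zero h1]
      _ ≤ ‖b v q‖ := neg_le_abs _
      _ ≤ ‖b‖ * ‖v‖ * ‖q‖ := b.le_opNorm₂ v q
      _ = ‖b‖ * ‖q‖ * ‖v‖ := by ring
  simpa only [one_mul] using mul_le_of_mul_sq_le_mul zero_le_one (by positivity) h_sq

lemma epsStokes_energy_identity {ε : ℝ} {h : Q →L[ℝ] ℝ} (h1 : ∀ φ : V, ⟪v, φ⟫ + b φ q = 0)
    (h2 : ∀ ψ : Q, ε * ⟪q, ψ⟫ - b v ψ = h ψ) :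
    ε * ‖q‖ ^ 2 + ‖v‖ ^ 2 = h q := by
  rw [← h2 q, real_inner_self_eq_norm_sq, norm_sq_eq_neg_apply_of_inner_add_eq_zero h1]
  ring

lemma epsStokes_mul_norm_le_opNorm {ε : ℝ} (hε : 0 ≤ ε) {h : Q →L[ℝ] ℝ}
    (h1 : ∀ φ : V, ⟪v, φ⟫ + b φ q = 0) (h2 : ∀ ψ : Q, ε * ⟪q, ψ⟫ - b v ψ = h ψ) :
    ε * ‖q‖ ≤ ‖h‖ := by
  refine mul_le_of_mul_sq_le_mul hε (norm_nonneg h) ?_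
  calc ε * ‖q‖ ^ 2 ≤ ε * ‖q‖ ^ 2 + ‖v‖ ^ 2 := le_add_of_nonneg_right (sq_nonneg _)
    _ = h q := epsStokes_energy_identity h1 h2
    _ ≤ ‖h q‖ := le_abs_self _
    _ ≤ ‖h‖ * ‖q‖ := h.le_opNorm q

end EpsStokes

theorem epsStokes_basic_estimate_general {V Q : Type*}
    [NormedAddCommGroup V] [InnerProductSpace ℝ V]
    [NormedAddCommGroup Q] [InnerProductSpace ℝ Q]
    (b : V →L[ℝ] Q →L[ℝ] ℝ)
    (ε : ℝ) (hε : 0 < ε) (h : Q →L[ℝ] ℝ) (v : V) (q : Q)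
    (h1 : ∀ φ : V, ⟪v, φ⟫ + b φ q = 0)
    (h2 : ∀ ψ : Q, ε * ⟪q, ψ⟫ - b v ψ = h ψ) :
    ‖q‖ ≤ (1 / ε) * ‖h‖ ∧ ‖v‖ ≤ (‖b‖ / ε) * ‖h‖ := by
  have hq : ‖q‖ ≤ (1 / ε) * ‖h‖ := by
    rw [one_div_mul_eq_div, le_div_iff₀' hε]
    exact epsStokes_mul_norm_le_opNorm hε.le h1 h2
  refine ⟨hq, ?_⟩
  calc ‖v‖ ≤ ‖b‖ * ‖q‖ := norm_le_opNorm_mul_norm_of_inner_add_eq_zero h1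
    _ ≤ ‖b‖ * ((1 / ε) * ‖h‖) := by gcongr
    _ = (‖b‖ / ε) * ‖h‖ := by ring

/-- Abstract form of Lemma 3.1: a priori bounds for the homogeneous ε-Stokes system with
right-hand side `h ∈ Q*`. -/
theorem epsStokes_basic_estimate {V Q : Type*}
    [NormedAddCommGroup V] [InnerProductSpace ℝ V] [CompleteSpace V]
    [NormedAddCommGroup Q] [InnerProductSpace ℝ Q] [CompleteSpace Q]
    (b : V →L[ℝ] Q →L[ℝ] ℝ)
    (ε : ℝ) (hε : 0 < ε) (h : Q →L[ℝ] ℝ) (v : V) (q : Q)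
    (h1 : ∀ φ : V, ⟪v, φ⟫ + b φ q = 0)
    (h2 : ∀ ψ : Q, ε * ⟪q, ψ⟫ - b v ψ = h ψ) :
    ‖q‖ ≤ (1 / ε) * ‖h‖ ∧ ‖v‖ ≤ (‖b‖ / ε) * ‖h‖ :=
  epsStokes_basic_estimate_general b ε hε h v q h1 h2
end

section
/- Let f ∈ V*, g ∈ Q*, let (u_PP, p_PP) ∈ V × Q solve the pressure-Poisson system PP, and for each ε > 0 let (u_ε, p_ε) ∈ V × Q solve the ε-Stokes system ES(ε). Then u_ε converges to u_PP in the norm of V and p_ε converges to p_PP in the norm of Q as ε → ∞. (Convergence part of Theorem 3.2.) -/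
/-!
The errors `e = u ε - uPP` and `q = p ε - pPP` satisfy `⟪e, φ⟫ + b φ q = 0` and
`ε ⟪q, ψ⟫ = b (u ε) ψ`. Testing with `φ = e` and `ψ = q` gives
`ε ‖q‖² + ‖e‖² = b uPP q ≤ ‖b uPP‖ ‖q‖`, so `‖q‖ ≤ ‖b uPP‖ / ε`, while the first
equation alone gives `‖e‖ ≤ ‖b‖ ‖q‖`.
-/

open scoped RealInnerProductSpace
open Filter Topology

section SaddlePoint

variable {V Q : Type*} [NormedAddCommGroup V] [InnerProductSpace ℝ V]
  [NormedAddCommGroup Q] [InnerProductSpace ℝ Q]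

theorem norm_le_opNorm_mul_of_forall_inner_add_eq_zero (b : V →L[ℝ] Q →L[ℝ] ℝ) {e : V} {q : Q}
    (h : ∀ φ, ⟪e, φ⟫ + b φ q = 0) : ‖e‖ ≤ ‖b‖ * ‖q‖ := by
  have hsq : ‖e‖ * ‖e‖ ≤ ‖b‖ * ‖q‖ * ‖e‖ :=
    calc ‖e‖ * ‖e‖ = -b e q := by rw [← real_inner_self_eq_norm_mul_norm]; linarith [h e]
      _ ≤ ‖b e q‖ := neg_le_abs _
      _ ≤ ‖b‖ * ‖e‖ * ‖q‖ := b.le_opNorm₂ e q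
      _ = ‖b‖ * ‖q‖ * ‖e‖ := by ring
  rcases (norm_nonneg e).eq_or_lt with he | he
  · rw [← he]; positivity
  · exact le_of_mul_le_mul_right hsq he

theorem norm_le_div_of_forall_inner_add_eq_zero (b : V →L[ℝ] Q →L[ℝ] ℝ) {e w : V} {q : Q}
    {ε : ℝ} (hε : 0 < ε) (h₁ : ∀ φ, ⟪e, φ⟫ + b φ q = 0) (h₂ : ε * ⟪q, q⟫ = b (e + w) q) :
    ‖q‖ ≤ ‖b w‖ / ε := by
  have hbe : b e q = -(‖e‖ * ‖e‖) := by
    rw [← real_inner_self_eq_norm_mul_norm]; linarith [h₁ e]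
  have hsq : ε * ‖q‖ * ‖q‖ ≤ ‖b w‖ * ‖q‖ :=
    calc ε * ‖q‖ * ‖q‖ = b w q - ‖e‖ * ‖e‖ := by
          rw [mul_assoc, ← real_inner_self_eq_norm_mul_norm, h₂, map_add, add_apply, hbe]
          ring
      _ ≤ ‖b w q‖ := by linarith [Real.le_norm_self (b w q), mul_self_nonneg ‖e‖]
      _ ≤ ‖b w‖ * ‖q‖ := (b w).le_opNorm q
  rw [le_div_iff₀' hε]
  rcases (norm_nonneg q).eq_or_lt with hq | hq
  · rw [← hq, mul_zero]; positivity
  · exact le_of_mul_le_mul_right hsq hq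

end SaddlePoint

theorem tendsto_atTop_of_norm_sub_le_div {E : Type*} [SeminormedAddCommGroup E] {x : ℝ → E}
    {a : E} (C : ℝ) (h : ∀ ε > 0, ‖x ε - a‖ ≤ C / ε) : Tendsto x atTop (𝓝 a) :=
  tendsto_iff_norm_sub_tendsto_zero.2 <|
    squeeze_zero' (.of_forall fun _ => norm_nonneg _) ((eventually_gt_atTop 0).mono h)
      (tendsto_const_nhds.div_atTop tendsto_id)

theorem epsStokes_tendsto_pressurePoisson_general {V Q : Type*}
    [NormedAddCommGroup V] [InnerProductSpace ℝ V]
    [NormedAddCommGroup Q] [InnerProductSpace ℝ Q]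
    (b : V →L[ℝ] Q →L[ℝ] ℝ)
    (f : V →L[ℝ] ℝ) (g : Q →L[ℝ] ℝ)
    (uPP : V) (pPP : Q)
    (hPP1 : ∀ φ : V, ⟪uPP, φ⟫ + b φ pPP = f φ)
    (hPP2 : ∀ ψ : Q, ⟪pPP, ψ⟫ = g ψ)
    (u : ℝ → V) (p : ℝ → Q)
    (hsol : ∀ ε : ℝ, 0 < ε →
      (∀ φ : V, ⟪u ε, φ⟫ + b φ (p ε) = f φ) ∧
      (∀ ψ : Q, ε * ⟪p ε, ψ⟫ - b (u ε) ψ = ε * g ψ)) :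
    Filter.Tendsto u Filter.atTop (nhds uPP) ∧
    Filter.Tendsto p Filter.atTop (nhds pPP) := by
  have hbound : ∀ ε > 0,
      ‖p ε - pPP‖ ≤ ‖b uPP‖ / ε ∧ ‖u ε - uPP‖ ≤ ‖b‖ * ‖b uPP‖ / ε := by
    intro ε hε
    obtain ⟨hu, hp⟩ := hsol ε hε
    have herr₁ : ∀ φ, ⟪u ε - uPP, φ⟫ + b φ (p ε - pPP) = 0 := fun φ => by
      rw [inner_sub_left, map_sub]; linarith [hu φ, hPP1 φ]
    have herr₂ : ε * ⟪p ε - pPP, p ε - pPP⟫ = b (u ε - uPP + uPP) (p ε - pPP) := by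
      rw [sub_add_cancel, inner_sub_left]
      linear_combination hp (p ε - pPP) - ε * hPP2 (p ε - pPP)
    have hpres := norm_le_div_of_forall_inner_add_eq_zero b hε herr₁ herr₂
    refine ⟨hpres, (norm_le_opNorm_mul_of_forall_inner_add_eq_zero b herr₁).trans ?_⟩
    rw [mul_div_assoc]
    gcongr
  exact ⟨tendsto_atTop_of_norm_sub_le_div _ fun ε hε => (hbound ε hε).2,
    tendsto_atTop_of_norm_sub_le_div _ fun ε hε => (hbound ε hε).1⟩

/-- Convergence part of Theorem 3.2: the solutions of ES(ε) converge strongly to the solution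
of PP as ε → ∞. -/
theorem epsStokes_tendsto_pressurePoisson {V Q : Type*}
    [NormedAddCommGroup V] [InnerProductSpace ℝ V] [CompleteSpace V]
    [NormedAddCommGroup Q] [InnerProductSpace ℝ Q] [CompleteSpace Q]
    (b : V →L[ℝ] Q →L[ℝ] ℝ)
    (f : V →L[ℝ] ℝ) (g : Q →L[ℝ] ℝ)
    (uPP : V) (pPP : Q)
    (hPP1 : ∀ φ : V, ⟪uPP, φ⟫ + b φ pPP = f φ)
    (hPP2 : ∀ ψ : Q, ⟪pPP, ψ⟫ = g ψ)
    (u : ℝ → V) (p : ℝ → Q)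
    (hsol : ∀ ε : ℝ, 0 < ε →
      (∀ φ : V, ⟪u ε, φ⟫ + b φ (p ε) = f φ) ∧
      (∀ ψ : Q, ε * ⟪p ε, ψ⟫ - b (u ε) ψ = ε * g ψ)) :
    Filter.Tendsto u Filter.atTop (nhds uPP) ∧
    Filter.Tendsto p Filter.atTop (nhds pPP) :=
  epsStokes_tendsto_pressurePoisson_general b f g uPP pPP hPP1 hPP2 u p hsol
end

section
/- Let ε > 0, f ∈ V*, g ∈ Q*, let (u_ε, p_ε) solve the ε-Stokes system ES(ε) and (u_PP, p_PP) solve the pressure-Poisson system PP. Suppose (v¹, q¹) ∈ V × Q satisfies ⟨v¹,φ⟩_V + b(φ,q¹) = 0 for all φ ∈ V and ⟨q¹,ψ⟩_Q = b(u_PP, ψ) for all ψ ∈ Q. Then ‖ε·(u_ε − u_PP) − v¹‖_V ≤ (‖b‖/ε)·D(v¹) and ‖ε·(p_ε − p_PP) − q¹‖_Q ≤ (1/ε)·D(v¹). (Abstract form of Theorem 3.4, first-order asymptotics as ε → ∞.) -/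
/-!
Put `w = ε (u_ε - u_PP) - v¹` and `r = ε (p_ε - p_PP) - q¹`. Subtracting the defining
equations, `(w, r)` solves the ε-Stokes system with right-hand sides `0` and `b(v¹, ·)`.
Testing the two equations with `w` and `r` gives `‖w‖² = -b(w, r)` and
`ε ‖r‖² + ‖w‖² = b(v¹, r)`, whence `‖r‖ ≤ D(v¹) / ε` and `‖w‖ ≤ ‖b‖ ‖r‖`.
-/

open scoped RealInnerProductSpace

lemma le_of_sq_le_mul_self {x c : ℝ} (hc : 0 ≤ c) (h : x ^ 2 ≤ c * x) : x ≤ c := by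
  nlinarith

section SaddlePoint

variable {V Q : Type*} [NormedAddCommGroup V] [InnerProductSpace ℝ V]
  [NormedAddCommGroup Q] [InnerProductSpace ℝ Q] {b : V →L[ℝ] Q →L[ℝ] ℝ} {w : V} {r : Q}

lemma norm_sq_eq_neg_of_inner_add_eq_zero (hw : ∀ φ, ⟪w, φ⟫ + b φ r = 0) :
    ‖w‖ ^ 2 = -b w r := by
  rw [← real_inner_self_eq_norm_sq]
  linarith [hw w]

lemma norm_le_opNorm_mul_of_inner_add_eq_zero (hw : ∀ φ, ⟪w, φ⟫ + b φ r = 0) :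
    ‖w‖ ≤ ‖b‖ * ‖r‖ := by
  refine le_of_sq_le_mul_self (by positivity) ?_
  calc ‖w‖ ^ 2 = -b w r := norm_sq_eq_neg_of_inner_add_eq_zero hw
    _ ≤ ‖b w‖ * ‖r‖ := (neg_le_abs _).trans ((b w).le_opNorm r)
    _ ≤ ‖b‖ * ‖w‖ * ‖r‖ := by gcongr; exact b.le_opNorm w
    _ = ‖b‖ * ‖r‖ * ‖w‖ := by ring

lemma norm_le_norm_div_of_epsStokes {ε : ℝ} (hε : 0 < ε) {h : Q →L[ℝ] ℝ}
    (hw : ∀ φ, ⟪w, φ⟫ + b φ r = 0) (hr : ∀ ψ, ε * ⟪r, ψ⟫ - b w ψ = h ψ) :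
    ‖r‖ ≤ ‖h‖ / ε := by
  have energy : ε * ‖r‖ ^ 2 + ‖w‖ ^ 2 = h r := by
    rw [norm_sq_eq_neg_of_inner_add_eq_zero hw, ← real_inner_self_eq_norm_sq, ← hr r]
    ring
  rw [le_div_iff₀ hε, mul_comm]
  refine le_of_sq_le_mul_self (norm_nonneg h) ?_
  have : ε * ‖r‖ ^ 2 ≤ ‖h‖ * ‖r‖ :=
    calc ε * ‖r‖ ^ 2 ≤ h r := by nlinarith [sq_nonneg ‖w‖]
      _ ≤ ‖h‖ * ‖r‖ := (le_abs_self _).trans (h.le_opNorm r)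
  nlinarith [norm_nonneg r]

end SaddlePoint

/-- The divergence seminorm `D(v¹)` is the operator norm `‖b v1‖`. -/
theorem epsStokes_first_order_asymptotics_general {V Q : Type*}
    [NormedAddCommGroup V] [InnerProductSpace ℝ V]
    [NormedAddCommGroup Q] [InnerProductSpace ℝ Q]
    (b : V →L[ℝ] Q →L[ℝ] ℝ)
    (ε : ℝ) (hε : 0 < ε) (f : V →L[ℝ] ℝ) (g : Q →L[ℝ] ℝ)
    (uε : V) (pε : Q) (uPP : V) (pPP : Q) (v1 : V) (q1 : Q)
    (hES1 : ∀ φ : V, ⟪uε, φ⟫ + b φ pε = f φ)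
    (hES2 : ∀ ψ : Q, ε * ⟪pε, ψ⟫ - b uε ψ = ε * g ψ)
    (hPP1 : ∀ φ : V, ⟪uPP, φ⟫ + b φ pPP = f φ)
    (hPP2 : ∀ ψ : Q, ⟪pPP, ψ⟫ = g ψ)
    (hv1 : ∀ φ : V, ⟪v1, φ⟫ + b φ q1 = 0)
    (hq1 : ∀ ψ : Q, ⟪q1, ψ⟫ = b uPP ψ) :
    ‖ε • (uε - uPP) - v1‖ ≤ (‖b‖ / ε) * ‖b v1‖ ∧
    ‖ε • (pε - pPP) - q1‖ ≤ (1 / ε) * ‖b v1‖ := by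
  have momentum : ∀ φ, ⟪ε • (uε - uPP) - v1, φ⟫ + b φ (ε • (pε - pPP) - q1) = 0 := by
    intro φ
    simp only [inner_sub_left, real_inner_smul_left, map_sub, map_smul, smul_eq_mul]
    linear_combination ε * hES1 φ - ε * hPP1 φ - hv1 φ
  have mass : ∀ ψ, ε * ⟪ε • (pε - pPP) - q1, ψ⟫ - b (ε • (uε - uPP) - v1) ψ = b v1 ψ := by
    intro ψ
    simp only [inner_sub_left, real_inner_smul_left, map_sub, map_smul,
      sub_apply, smul_apply, smul_eq_mul]
    linear_combination ε * hES2 ψ - ε ^ 2 * hPP2 ψ - ε * hq1 ψ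
  have pressure := norm_le_norm_div_of_epsStokes hε momentum mass
  refine ⟨?_, by rwa [one_div_mul_eq_div]⟩
  calc _ ≤ ‖b‖ * ‖ε • (pε - pPP) - q1‖ := norm_le_opNorm_mul_of_inner_add_eq_zero momentum
    _ ≤ ‖b‖ * (‖b v1‖ / ε) := by gcongr
    _ = ‖b‖ / ε * ‖b v1‖ := by ring

/-- Abstract form of Theorem 3.4: first-order asymptotics of the ε-Stokes solutions as ε → ∞,
with the divergence seminorm `D(v) = ‖b v‖ = sup{|b(v,ψ)| : ‖ψ‖ ≤ 1}`. -/
theorem epsStokes_first_order_asymptotics {V Q : Type*}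
    [NormedAddCommGroup V] [InnerProductSpace ℝ V] [CompleteSpace V]
    [NormedAddCommGroup Q] [InnerProductSpace ℝ Q] [CompleteSpace Q]
    (b : V →L[ℝ] Q →L[ℝ] ℝ)
    (ε : ℝ) (hε : 0 < ε) (f : V →L[ℝ] ℝ) (g : Q →L[ℝ] ℝ)
    (uε : V) (pε : Q) (uPP : V) (pPP : Q) (v1 : V) (q1 : Q)
    (hES1 : ∀ φ : V, ⟪uε, φ⟫ + b φ pε = f φ)
    (hES2 : ∀ ψ : Q, ε * ⟪pε, ψ⟫ - b uε ψ = ε * g ψ)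
    (hPP1 : ∀ φ : V, ⟪uPP, φ⟫ + b φ pPP = f φ)
    (hPP2 : ∀ ψ : Q, ⟪pPP, ψ⟫ = g ψ)
    (hv1 : ∀ φ : V, ⟪v1, φ⟫ + b φ q1 = 0)
    (hq1 : ∀ ψ : Q, ⟪q1, ψ⟫ = b uPP ψ) :
    ‖ε • (uε - uPP) - v1‖ ≤ (‖b‖ / ε) * ‖b v1‖ ∧
    ‖ε • (pε - pPP) - q1‖ ≤ (1 / ε) * ‖b v1‖ :=
  epsStokes_first_order_asymptotics_general b ε hε f g uε pε uPP pPP v1 q1 hES1 hES2 hPP1 hPP2 hv1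
    hq1
end

section
/- Let k ≥ 1 be a natural number, ε > 0, f ∈ V*, g ∈ Q*, let (u_ε, p_ε) solve the ε-Stokes system ES(ε) and (u_PP, p_PP) solve the pressure-Poisson system PP. Set v⁽⁰⁾ := u_PP, and suppose v⁽¹⁾, …, v⁽ᵏ⁾ ∈ V and q⁽¹⁾, …, q⁽ᵏ⁾ ∈ Q satisfy, for each 1 ≤ i ≤ k, ⟨v⁽ⁱ⁾,φ⟩_V + b(φ,q⁽ⁱ⁾) = 0 for all φ ∈ V and ⟨q⁽ⁱ⁾,ψ⟩_Q = b(v⁽ⁱ⁻¹⁾, ψ) for all ψ ∈ Q. Then ‖u_ε − (u_PP + Σ_{i=1}^{k} ε^{−i}·v⁽ⁱ⁾)‖_V ≤ (‖b‖/ε^{k+1})·D(v⁽ᵏ⁾) and ‖p_ε − (p_PP + Σ_{i=1}^{k} ε^{−i}·q⁽ⁱ⁾)‖_Q ≤ (1/ε^{k+1})·D(v⁽ᵏ⁾). (Abstract form of Theorem 3.5, regular perturbation asymptotics of the ε-Stokes problem.) -/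
/-!
Subtracting the pressure-Poisson solution and the first `k` correctors from the ε-Stokes
solution leaves an error pair `(w, r)` that satisfies the ε-Stokes system with zero momentum
data and continuity data `ε⁻ᵏ b(v⁽ᵏ⁾, ·)`: the correctors are built so that the continuity
residuals telescope. Testing the momentum equation with `w` gives `b(w, r) = -‖w‖² ≤ 0`, so
testing the continuity equation with `r` yields `ε ‖r‖ ≤ ε⁻ᵏ D(v⁽ᵏ⁾)`, while the momentum
equation alone gives `‖w‖ ≤ ‖b‖ ‖r‖`.
-/

open scoped RealInnerProductSpace

open Finset

theorem Finset.sum_Icc_one_sub_pred {M : Type*} [AddCommGroup M] (a : ℕ → M) (k : ℕ) :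
    ∑ i ∈ Icc 1 k, (a (i - 1) - a i) = a 0 - a k := by
  induction k with
  | zero => simp
  | succ k ih =>
    rw [sum_Icc_succ_top (by omega), ih, Nat.add_sub_cancel]
    abel

section SaddlePoint

variable {V Q : Type*} [NormedAddCommGroup V] [InnerProductSpace ℝ V]
  [NormedAddCommGroup Q] [InnerProductSpace ℝ Q] (b : V →L[ℝ] Q →L[ℝ] ℝ) {w : V} {r : Q}

theorem momentum_sub_add_sum_eq_zero {f : V →L[ℝ] ℝ} {u₁ u₂ : V} {p₁ p₂ : Q}
    {s : Finset ℕ} (c : ℕ → ℝ) {v : ℕ → V} {q : ℕ → Q}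
    (h₁ : ∀ φ : V, ⟪u₁, φ⟫ + b φ p₁ = f φ) (h₂ : ∀ φ : V, ⟪u₂, φ⟫ + b φ p₂ = f φ)
    (hvq : ∀ i ∈ s, ∀ φ : V, ⟪v i, φ⟫ + b φ (q i) = 0) (φ : V) :
    ⟪u₁ - (u₂ + ∑ i ∈ s, c i • v i), φ⟫ + b φ (p₁ - (p₂ + ∑ i ∈ s, c i • q i)) = 0 := by
  have hsum : ∑ i ∈ s, c i * (⟪v i, φ⟫ + b φ (q i)) = 0 :=
    sum_eq_zero fun i hi => by rw [hvq i hi φ, mul_zero]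
  simp only [inner_sub_left, inner_add_left, sum_inner, real_inner_smul_left, map_sub, map_add,
    map_sum, map_smul, smul_eq_mul, mul_add, sum_add_distrib] at hsum ⊢
  linear_combination h₁ φ - h₂ φ - hsum

theorem continuity_sub_add_sum_eq {ε : ℝ} (hε : ε ≠ 0) {g : Q →L[ℝ] ℝ} {u₁ : V} {p₁ p₂ : Q}
    {k : ℕ} {v : ℕ → V} {q : ℕ → Q}
    (h₁ : ∀ ψ : Q, ε * ⟪p₁, ψ⟫ - b u₁ ψ = ε * g ψ) (h₂ : ∀ ψ : Q, ⟪p₂, ψ⟫ = g ψ)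
    (hq : ∀ i ∈ Icc 1 k, ∀ ψ : Q, ⟪q i, ψ⟫ = b (v (i - 1)) ψ) (ψ : Q) :
    ε * ⟪p₁ - (p₂ + ∑ i ∈ Icc 1 k, (ε⁻¹) ^ i • q i), ψ⟫
        - b (u₁ - (v 0 + ∑ i ∈ Icc 1 k, (ε⁻¹) ^ i • v i)) ψ
      = ((ε⁻¹) ^ k • b (v k)) ψ := by
  set a : ℕ → ℝ := fun j => (ε⁻¹) ^ j * b (v j) ψ
  have hterm : ∀ i ∈ Icc 1 k, (ε⁻¹) ^ i * (ε * ⟪q i, ψ⟫ - b (v i) ψ) = a (i - 1) - a i := by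
    intro i hi
    obtain ⟨j, rfl⟩ := Nat.exists_eq_add_of_le' (mem_Icc.mp hi).1
    have hpow : (ε⁻¹) ^ (j + 1) * ε = (ε⁻¹) ^ j := by
      rw [pow_succ, mul_assoc, inv_mul_cancel₀ hε, mul_one]
    rw [hq _ hi, Nat.add_sub_cancel]
    linear_combination b (v j) ψ * hpow
  have htel : ε * ∑ i ∈ Icc 1 k, (ε⁻¹) ^ i * ⟪q i, ψ⟫ - ∑ i ∈ Icc 1 k, (ε⁻¹) ^ i * b (v i) ψ
      = a 0 - a k := by
    rw [← sum_Icc_one_sub_pred, ← sum_congr rfl hterm, mul_sum, ← sum_sub_distrib]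
    exact sum_congr rfl fun i _ => by ring
  simp only [a, pow_zero, one_mul] at htel
  simp only [inner_sub_left, inner_add_left, sum_inner, real_inner_smul_left, map_sub, map_add,
    map_sum, map_smul, sub_apply, add_apply,
    FunLike.coe_sum, Finset.sum_apply, smul_apply, smul_eq_mul]
  linear_combination h₁ ψ - ε * h₂ ψ - htel

theorem apply_eq_neg_norm_sq_of_momentum_eq_zero (hA : ∀ φ : V, ⟪w, φ⟫ + b φ r = 0) :
    b w r = -‖w‖ ^ 2 := by
  have h := hA w
  rw [real_inner_self_eq_norm_sq] at h
  linarith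

theorem norm_le_opNorm_mul_norm_of_momentum_eq_zero (hA : ∀ φ : V, ⟪w, φ⟫ + b φ r = 0) :
    ‖w‖ ≤ ‖b‖ * ‖r‖ := by
  have hsq : ‖w‖ * ‖w‖ ≤ ‖b‖ * ‖r‖ * ‖w‖ :=
    calc ‖w‖ * ‖w‖ = -b w r := by
          rw [apply_eq_neg_norm_sq_of_momentum_eq_zero b hA]; ring
      _ ≤ ‖b w r‖ := neg_le_abs _
      _ ≤ ‖b‖ * ‖w‖ * ‖r‖ := b.le_opNorm₂ w r
      _ = ‖b‖ * ‖r‖ * ‖w‖ := by ring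
  rcases (norm_nonneg w).eq_or_lt with hw | hw
  · rw [← hw]; positivity
  · exact le_of_mul_le_mul_right hsq hw

theorem mul_norm_le_norm_of_momentum_eq_zero {ε : ℝ} {h : Q →L[ℝ] ℝ}
    (hA : ∀ φ : V, ⟪w, φ⟫ + b φ r = 0) (hB : ∀ ψ : Q, ε * ⟪r, ψ⟫ - b w ψ = h ψ) :
    ε * ‖r‖ ≤ ‖h‖ := by
  have hsq : ε * ‖r‖ * ‖r‖ ≤ ‖h‖ * ‖r‖ :=
    calc ε * ‖r‖ * ‖r‖ = h r + b w r := by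
          rw [← hB r, real_inner_self_eq_norm_sq]; ring
      _ ≤ h r := by
          rw [apply_eq_neg_norm_sq_of_momentum_eq_zero b hA]
          exact add_le_of_nonpos_right (neg_nonpos.mpr (sq_nonneg _))
      _ ≤ ‖h‖ * ‖r‖ := (le_abs_self _).trans (h.le_opNorm r)
  rcases (norm_nonneg r).eq_or_lt with hr | hr
  · rw [← hr, mul_zero]; exact norm_nonneg h
  · exact le_of_mul_le_mul_right hsq hr

end SaddlePoint

theorem epsStokes_regular_perturbation_general {V Q : Type*}
    [NormedAddCommGroup V] [InnerProductSpace ℝ V]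
    [NormedAddCommGroup Q] [InnerProductSpace ℝ Q]
    (b : V →L[ℝ] Q →L[ℝ] ℝ)
    (k : ℕ)
    (ε : ℝ) (hε : 0 < ε) (f : V →L[ℝ] ℝ) (g : Q →L[ℝ] ℝ)
    (uε : V) (pε : Q) (uPP : V) (pPP : Q)
    (v : ℕ → V) (q : ℕ → Q)
    (hES1 : ∀ φ : V, ⟪uε, φ⟫ + b φ pε = f φ)
    (hES2 : ∀ ψ : Q, ε * ⟪pε, ψ⟫ - b uε ψ = ε * g ψ)
    (hPP1 : ∀ φ : V, ⟪uPP, φ⟫ + b φ pPP = f φ)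
    (hPP2 : ∀ ψ : Q, ⟪pPP, ψ⟫ = g ψ)
    (hv0 : v 0 = uPP)
    (hvq : ∀ i : ℕ, 1 ≤ i → i ≤ k →
      (∀ φ : V, ⟪v i, φ⟫ + b φ (q i) = 0) ∧
      (∀ ψ : Q, ⟪q i, ψ⟫ = b (v (i - 1)) ψ)) :
    ‖uε - (uPP + ∑ i ∈ Finset.Icc 1 k, (ε⁻¹) ^ i • v i)‖
      ≤ (‖b‖ / ε ^ (k + 1)) * ‖b (v k)‖ ∧
    ‖pε - (pPP + ∑ i ∈ Finset.Icc 1 k, (ε⁻¹) ^ i • q i)‖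
      ≤ (1 / ε ^ (k + 1)) * ‖b (v k)‖ := by
  have hcorr : ∀ i ∈ Icc 1 k, _ := fun i hi => hvq i (mem_Icc.mp hi).1 (mem_Icc.mp hi).2
  have hA := momentum_sub_add_sum_eq_zero b (fun i => (ε⁻¹) ^ i) hES1 hPP1
    fun i hi => (hcorr i hi).1
  have hB := continuity_sub_add_sum_eq b hε.ne' hES2 hPP2 fun i hi => (hcorr i hi).2
  rw [hv0] at hB
  have hr : ‖pε - (pPP + ∑ i ∈ Icc 1 k, (ε⁻¹) ^ i • q i)‖ ≤ 1 / ε ^ (k + 1) * ‖b (v k)‖ := by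
    have h := mul_norm_le_norm_of_momentum_eq_zero b hA hB
    rw [norm_smul, norm_pow, norm_inv, Real.norm_of_nonneg hε.le, inv_pow] at h
    rwa [one_div, pow_succ', mul_inv, mul_assoc, le_inv_mul_iff₀ hε]
  refine ⟨(norm_le_opNorm_mul_norm_of_momentum_eq_zero b hA).trans ?_, hr⟩
  calc ‖b‖ * _ ≤ ‖b‖ * (1 / ε ^ (k + 1) * ‖b (v k)‖) := by gcongr
    _ = ‖b‖ / ε ^ (k + 1) * ‖b (v k)‖ := by ring

/-- Abstract form of Theorem 3.5: regular perturbation asymptotics of order k of the ε-Stokes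
solutions as ε → ∞, with the divergence seminorm `D(v) = ‖b v‖`. -/
theorem epsStokes_regular_perturbation {V Q : Type*}
    [NormedAddCommGroup V] [InnerProductSpace ℝ V] [CompleteSpace V]
    [NormedAddCommGroup Q] [InnerProductSpace ℝ Q] [CompleteSpace Q]
    (b : V →L[ℝ] Q →L[ℝ] ℝ)
    (k : ℕ) (hk : 1 ≤ k)
    (ε : ℝ) (hε : 0 < ε) (f : V →L[ℝ] ℝ) (g : Q →L[ℝ] ℝ)
    (uε : V) (pε : Q) (uPP : V) (pPP : Q)
    (v : ℕ → V) (q : ℕ → Q)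
    (hES1 : ∀ φ : V, ⟪uε, φ⟫ + b φ pε = f φ)
    (hES2 : ∀ ψ : Q, ε * ⟪pε, ψ⟫ - b uε ψ = ε * g ψ)
    (hPP1 : ∀ φ : V, ⟪uPP, φ⟫ + b φ pPP = f φ)
    (hPP2 : ∀ ψ : Q, ⟪pPP, ψ⟫ = g ψ)
    (hv0 : v 0 = uPP)
    (hvq : ∀ i : ℕ, 1 ≤ i → i ≤ k →
      (∀ φ : V, ⟪v i, φ⟫ + b φ (q i) = 0) ∧
      (∀ ψ : Q, ⟪q i, ψ⟫ = b (v (i - 1)) ψ)) :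
    ‖uε - (uPP + ∑ i ∈ Finset.Icc 1 k, (ε⁻¹) ^ i • v i)‖
      ≤ (‖b‖ / ε ^ (k + 1)) * ‖b (v k)‖ ∧
    ‖pε - (pPP + ∑ i ∈ Finset.Icc 1 k, (ε⁻¹) ^ i • q i)‖
      ≤ (1 / ε ^ (k + 1)) * ‖b (v k)‖ :=
  epsStokes_regular_perturbation_general b k ε hε f g uε pε uPP pPP v q hES1 hES2 hPP1 hPP2 hv0 hvq
end

section
/- Let X and Y be real Banach spaces, let A, B : X → Y be continuous linear maps, suppose A is bijective with continuous inverse A⁻¹, let s > 0, and suppose A + s·B is bijective with continuous inverse (A + s·B)⁻¹. Then for every k ∈ ℕ and every f ∈ Y, ‖(A + s·B)⁻¹ f − A⁻¹ (Σ_{i=0}^{k} (−s·(B ∘ A⁻¹))^i f)‖ ≤ ‖(A + s·B)⁻¹‖ · s^{k+1} · ‖(B ∘ A⁻¹)^{k+1} f‖, where ‖(A + s·B)⁻¹‖ is the operator norm of the inverse. In particular, with s = 1/ε this is the operator-theoretic interpretation of the asymptotic expansion: ‖(A + ε⁻¹B)⁻¹ f − A⁻¹ Σ_{i=0}^{k}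 (−ε⁻¹ B A⁻¹)^i f‖ ≤ c·ε^{−(k+1)}·‖(B A⁻¹)^{k+1} f‖ with c = ‖(A + ε⁻¹B)⁻¹‖. (Remark following Theorem 3.5.) -/
/-! With `T = B ∘ A'` we have `(A + s • B) ∘ A' = 1 + s • T`, and the geometric sum telescopes:
`(1 + s • T) ∑_{i<n} (-s • T)^i = 1 - (-s • T)^n`. Applying the left inverse `M` of `A + s • B`
shows that the error of the truncated Neumann series is exactly `M ((-s • T)^n f)`. -/

open Finset

namespace ContinuousLinearMap

section Identity

variable {𝕜 X Y : Type*} [NormedField 𝕜]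
  [SeminormedAddCommGroup X] [NormedSpace 𝕜 X] [SeminormedAddCommGroup Y] [NormedSpace 𝕜 Y]
  {A B : X →L[𝕜] Y} {A' M : Y →L[𝕜] X} {s : 𝕜}

theorem add_smul_comp_of_comp_eq_id (hA : A ∘L A' = .id 𝕜 Y) :
    (A + s • B) ∘L A' = 1 - (-s) • (B ∘L A') := by
  rw [add_comp, hA, smul_comp, neg_smul, sub_neg_eq_add]
  rfl

theorem sub_comp_geom_sum_eq_comp_pow (hA : A ∘L A' = .id 𝕜 Y) (hM : M ∘L (A + s • B) = .id 𝕜 X)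
    (n : ℕ) :
    M - A' ∘L ∑ i ∈ range n, ((-s) • (B ∘L A')) ^ i = M ∘L ((-s) • (B ∘L A')) ^ n := by
  have hgeom : A' ∘L ∑ i ∈ range n, ((-s) • (B ∘L A')) ^ i
      = M ∘L (1 - ((-s) • (B ∘L A')) ^ n) := by
    rw [← mul_neg_geom_sum, mul_def, ← comp_assoc, ← add_smul_comp_of_comp_eq_id hA,
      ← comp_assoc, hM, id_comp]
  rw [hgeom, comp_sub, one_def, comp_id, sub_sub_cancel]

end Identity

variable {𝕜 X Y : Type*} [NontriviallyNormedField 𝕜]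
  [SeminormedAddCommGroup X] [NormedSpace 𝕜 X] [SeminormedAddCommGroup Y] [NormedSpace 𝕜 Y]
  {A B : X →L[𝕜] Y} {A' M : Y →L[𝕜] X} {s : 𝕜}

theorem norm_sub_apply_geom_sum_le (hA : A ∘L A' = .id 𝕜 Y)
    (hM : M ∘L (A + s • B) = .id 𝕜 X) (n : ℕ) (f : Y) :
    ‖M f - A' ((∑ i ∈ range n, ((-s) • (B ∘L A')) ^ i) f)‖
      ≤ ‖M‖ * ‖s‖ ^ n * ‖((B ∘L A') ^ n) f‖ := by
  have h := congrArg (· f) (sub_comp_geom_sum_eq_comp_pow hA hM n)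
  simp only [sub_apply, comp_apply] at h
  rw [h, smul_pow, smul_apply, ← norm_neg s, ← norm_pow, mul_assoc, ← norm_smul]
  exact le_opNorm M _

end ContinuousLinearMap

open ContinuousLinearMap in
theorem neumann_series_operator_estimate_general {X Y : Type*}
    [NormedAddCommGroup X] [NormedSpace ℝ X]
    [NormedAddCommGroup Y] [NormedSpace ℝ Y]
    (A B : X →L[ℝ] Y) (A' : Y →L[ℝ] X)
    (hA2 : ∀ y : Y, A (A' y) = y)
    (s : ℝ) (hs : 0 < s) (M : Y →L[ℝ] X)
    (hM1 : ∀ x : X, M (A x + s • B x) = x)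
    (k : ℕ) (f : Y) :
    ‖M f - A' (∑ i ∈ Finset.range (k + 1), (-s) ^ i • ((B.comp A') ^ i) f)‖
      ≤ ‖M‖ * s ^ (k + 1) * ‖((B.comp A') ^ (k + 1)) f‖ := by
  have hsum : ∑ i ∈ range (k + 1), (-s) ^ i • ((B ∘L A') ^ i) f
      = (∑ i ∈ range (k + 1), ((-s) • (B ∘L A')) ^ i) f := by
    simp only [_root_.sum_apply, smul_pow, smul_apply]
  have hA : A ∘L A' = .id ℝ Y := ext hA2
  have hM : M ∘L (A + s • B) = .id ℝ X := by
    ext x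
    rw [comp_apply, add_apply, smul_apply, id_apply]
    exact hM1 x
  have h := norm_sub_apply_geom_sum_le hA hM (k + 1) f
  rwa [Real.norm_of_nonneg hs.le, ← hsum] at h

/-- Operator-theoretic interpretation of the asymptotic expansion (remark after Theorem 3.5):
if `A` is invertible with continuous inverse `A'` and `A + s•B` is invertible with continuous
inverse `M`, then the truncated Neumann-series approximation satisfies
`‖M f − A' Σ_{i≤k} (−s)^i (B∘A')^i f‖ ≤ ‖M‖ s^{k+1} ‖(B∘A')^{k+1} f‖`. -/
theorem neumann_series_operator_estimate {X Y : Type*}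
    [NormedAddCommGroup X] [NormedSpace ℝ X] [CompleteSpace X]
    [NormedAddCommGroup Y] [NormedSpace ℝ Y] [CompleteSpace Y]
    (A B : X →L[ℝ] Y) (A' : Y →L[ℝ] X)
    (hA1 : ∀ x : X, A' (A x) = x) (hA2 : ∀ y : Y, A (A' y) = y)
    (s : ℝ) (hs : 0 < s) (M : Y →L[ℝ] X)
    (hM1 : ∀ x : X, M (A x + s • B x) = x)
    (hM2 : ∀ y : Y, A (M y) + s • B (M y) = y)
    (k : ℕ) (f : Y) :
    ‖M f - A' (∑ i ∈ Finset.range (k + 1), (-s) ^ i • ((B.comp A') ^ i) f)‖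
      ≤ ‖M‖ * s ^ (k + 1) * ‖((B.comp A') ^ (k + 1)) f‖ :=
  neumann_series_operator_estimate_general A B A' hA2 s hs M hM1 k f
end

section
/- Let ε > 0, f ∈ V*, g ∈ Q*, and let (u_ε, p_ε) ∈ V × Q solve the ε-Stokes system ES(ε). Then ‖u_ε‖_V² + ε·‖p_ε‖_Q² ≤ ‖f‖_{V*}² + ε·‖g‖_{Q*}². (Energy bound established in the proof of Theorem 4.2.) -/
open scoped RealInnerProductSpace

/-! Testing ES(ε) with `(u_ε, p_ε)` makes the coupling terms `± b(u_ε, p_ε)` cancel, so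
`‖u_ε‖² + ε‖p_ε‖² = f(u_ε) + ε g(p_ε)`; bounding the right side by `‖f‖‖u_ε‖ + ε‖g‖‖p_ε‖`
and applying Young's inequality `2xy ≤ x² + y²` to each product gives the energy bound. -/

theorem epsStokes_energy_identity_s12 {V Q : Type*}
    [NormedAddCommGroup V] [InnerProductSpace ℝ V]
    [NormedAddCommGroup Q] [InnerProductSpace ℝ Q]
    (b : V →L[ℝ] Q →L[ℝ] ℝ) (ε : ℝ) (f : V →L[ℝ] ℝ) (g : Q →L[ℝ] ℝ) (u : V) (p : Q)
    (hES1 : ∀ φ : V, ⟪u, φ⟫ + b φ p = f φ)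
    (hES2 : ∀ ψ : Q, ε * ⟪p, ψ⟫ - b u ψ = ε * g ψ) :
    ‖u‖ ^ 2 + ε * ‖p‖ ^ 2 = f u + ε * g p := by
  have hu := hES1 u
  have hp := hES2 p
  rw [real_inner_self_eq_norm_sq] at hu hp
  linarith

theorem ContinuousLinearMap.apply_le_opNorm_mul {E : Type*} [SeminormedAddCommGroup E]
    [NormedSpace ℝ E] (f : E →L[ℝ] ℝ) (x : E) : f x ≤ ‖f‖ * ‖x‖ :=
  (le_abs_self _).trans (f.le_opNorm x)

theorem sq_add_mul_sq_le_of_le_mul_add_mul {x y a c ε : ℝ} (hε : 0 ≤ ε)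
    (h : x ^ 2 + ε * y ^ 2 ≤ a * x + ε * (c * y)) :
    x ^ 2 + ε * y ^ 2 ≤ a ^ 2 + ε * c ^ 2 := by
  nlinarith [sq_nonneg (a - x), mul_nonneg hε (sq_nonneg (c - y))]

theorem epsStokes_energy_bound_general {V Q : Type*}
    [NormedAddCommGroup V] [InnerProductSpace ℝ V]
    [NormedAddCommGroup Q] [InnerProductSpace ℝ Q]
    (b : V →L[ℝ] Q →L[ℝ] ℝ)
    (ε : ℝ) (hε : 0 < ε) (f : V →L[ℝ] ℝ) (g : Q →L[ℝ] ℝ)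
    (uε : V) (pε : Q)
    (hES1 : ∀ φ : V, ⟪uε, φ⟫ + b φ pε = f φ)
    (hES2 : ∀ ψ : Q, ε * ⟪pε, ψ⟫ - b uε ψ = ε * g ψ) :
    ‖uε‖ ^ 2 + ε * ‖pε‖ ^ 2 ≤ ‖f‖ ^ 2 + ε * ‖g‖ ^ 2 := by
  apply sq_add_mul_sq_le_of_le_mul_add_mul hε.le
  rw [epsStokes_energy_identity_s12 b ε f g uε pε hES1 hES2]
  gcongr
  · exact f.apply_le_opNorm_mul uε
  · exact g.apply_le_opNorm_mul pε

/-- Energy bound from the proof of Theorem 4.2: any solution of ES(ε) satisfies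
`‖u_ε‖² + ε‖p_ε‖² ≤ ‖f‖² + ε‖g‖²`. -/
theorem epsStokes_energy_bound {V Q : Type*}
    [NormedAddCommGroup V] [InnerProductSpace ℝ V] [CompleteSpace V]
    [NormedAddCommGroup Q] [InnerProductSpace ℝ Q] [CompleteSpace Q]
    (b : V →L[ℝ] Q →L[ℝ] ℝ)
    (ε : ℝ) (hε : 0 < ε) (f : V →L[ℝ] ℝ) (g : Q →L[ℝ] ℝ)
    (uε : V) (pε : Q)
    (hES1 : ∀ φ : V, ⟪uε, φ⟫ + b φ pε = f φ)
    (hES2 : ∀ ψ : Q, ε * ⟪pε, ψ⟫ - b uε ψ = ε * g ψ) :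
    ‖uε‖ ^ 2 + ε * ‖pε‖ ^ 2 ≤ ‖f‖ ^ 2 + ε * ‖g‖ ^ 2 :=
  epsStokes_energy_bound_general b ε hε f g uε pε hES1 hES2
end

section
/- Let ε > 0, f ∈ V*, g ∈ Q*, let (u_ε, p_ε) ∈ V × Q solve the ε-Stokes system ES(ε), and let (u_S, p_S) ∈ V × Q solve the Stokes system S (same f). Then ‖u_ε − u_S‖_V ≤ (√ε/2)·(‖p_S‖_Q + ‖g‖_{Q*}). (Velocity estimate of Theorem 4.4: rate √ε for the ε-Stokes approximation of the Stokes problem when the Stokes pressure lies in Q.) -/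
/-!
Subtracting the two momentum equations and testing with `e = u_ε - u_S` gives
`‖e‖² = -b(e, q)` with `q = p_ε - p_S`; the incompressibility of `u_S` and the
pressure equation of ES(ε) then give `‖e‖² = ε (g q - ⟪p_ε, q⟫)`. Writing
`p_ε = p_S + q`, this is `ε (ℓ q - ‖q‖²)` for `ℓ = g - ⟪p_S, ·⟫`, and
`ℓ q - ‖q‖² ≤ ‖ℓ‖² / 4 ≤ (‖p_S‖ + ‖g‖)² / 4`.
-/

open scoped RealInnerProductSpace

theorem ContinuousLinearMap.apply_sub_norm_sq_le {E : Type*} [SeminormedAddCommGroup E]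
    [NormedSpace ℝ E] (ℓ : E →L[ℝ] ℝ) (x : E) : ℓ x - ‖x‖ ^ 2 ≤ ‖ℓ‖ ^ 2 / 4 := by
  have hℓx : ℓ x ≤ ‖ℓ‖ * ‖x‖ := (le_abs_self _).trans (ℓ.le_opNorm x)
  nlinarith [sq_nonneg (‖x‖ - ‖ℓ‖ / 2)]

theorem norm_sub_sq_eq_neg_of_inner_add_eq {V Q : Type*}
    [NormedAddCommGroup V] [InnerProductSpace ℝ V] [NormedAddCommGroup Q] [NormedSpace ℝ Q]
    (b : V →L[ℝ] Q →L[ℝ] ℝ) {u₁ u₂ : V} {p₁ p₂ : Q}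
    (h : ∀ φ : V, ⟪u₁, φ⟫ + b φ p₁ = ⟪u₂, φ⟫ + b φ p₂) :
    ‖u₁ - u₂‖ ^ 2 = -b (u₁ - u₂) (p₁ - p₂) := by
  have h₁₂ := h (u₁ - u₂)
  rw [← real_inner_self_eq_norm_sq, inner_sub_left, map_sub]
  linarith

theorem epsStokes_velocity_rate_general {V Q : Type*}
    [NormedAddCommGroup V] [InnerProductSpace ℝ V]
    [NormedAddCommGroup Q] [InnerProductSpace ℝ Q]
    (b : V →L[ℝ] Q →L[ℝ] ℝ)
    (ε : ℝ) (hε : 0 < ε) (f : V →L[ℝ] ℝ) (g : Q →L[ℝ] ℝ)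
    (uε : V) (pε : Q) (uS : V) (pS : Q)
    (hES1 : ∀ φ : V, ⟪uε, φ⟫ + b φ pε = f φ)
    (hES2 : ∀ ψ : Q, ε * ⟪pε, ψ⟫ - b uε ψ = ε * g ψ)
    (hS1 : ∀ φ : V, ⟪uS, φ⟫ + b φ pS = f φ)
    (hS2 : ∀ ψ : Q, b uS ψ = 0) :
    ‖uε - uS‖ ≤ (Real.sqrt ε / 2) * (‖pS‖ + ‖g‖) := by
  set q := pε - pS
  set ℓ := g - innerSL ℝ pS
  have henergy : ‖uε - uS‖ ^ 2 = -b (uε - uS) q :=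
    norm_sub_sq_eq_neg_of_inner_add_eq b fun φ ↦ (hES1 φ).trans (hS1 φ).symm
  have hcoupling : b (uε - uS) q = ε * (⟪pε, q⟫ - g q) := by
    rw [b.map_sub, sub_apply, hS2, mul_sub]
    linarith [hES2 q]
  have hinner : ⟪pε, q⟫ = ⟪pS, q⟫ + ‖q‖ ^ 2 := by
    rw [← real_inner_self_eq_norm_sq, ← inner_add_left, add_sub_cancel]
  have hℓ : ‖ℓ‖ ≤ ‖pS‖ + ‖g‖ := by
    calc ‖ℓ‖ ≤ ‖g‖ + ‖innerSL ℝ pS‖ := norm_sub_le _ _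
      _ = ‖pS‖ + ‖g‖ := by rw [innerSL_apply_norm, add_comm]
  have hsq : ‖uε - uS‖ ^ 2 ≤ (Real.sqrt ε / 2 * (‖pS‖ + ‖g‖)) ^ 2 :=
    calc ‖uε - uS‖ ^ 2 = ε * (ℓ q - ‖q‖ ^ 2) := by
          rw [henergy, hcoupling, hinner]
          simp only [ℓ, sub_apply, innerSL_apply_apply]
          ring
      _ ≤ ε * (‖ℓ‖ ^ 2 / 4) := by gcongr; exact ℓ.apply_sub_norm_sq_le q
      _ ≤ ε * ((‖pS‖ + ‖g‖) ^ 2 / 4) := by gcongr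
      _ = (Real.sqrt ε / 2 * (‖pS‖ + ‖g‖)) ^ 2 := by
          rw [mul_pow, div_pow, Real.sq_sqrt hε.le]; ring
  exact (pow_le_pow_iff_left₀ (norm_nonneg _) (by positivity) two_ne_zero).mp hsq

/-- Velocity estimate of Theorem 4.4: `‖u_ε − u_S‖ ≤ (√ε/2)(‖p_S‖ + ‖g‖)`. -/
theorem epsStokes_velocity_rate {V Q : Type*}
    [NormedAddCommGroup V] [InnerProductSpace ℝ V] [CompleteSpace V]
    [NormedAddCommGroup Q] [InnerProductSpace ℝ Q] [CompleteSpace Q]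
    (b : V →L[ℝ] Q →L[ℝ] ℝ)
    (ε : ℝ) (hε : 0 < ε) (f : V →L[ℝ] ℝ) (g : Q →L[ℝ] ℝ)
    (uε : V) (pε : Q) (uS : V) (pS : Q)
    (hES1 : ∀ φ : V, ⟪uε, φ⟫ + b φ pε = f φ)
    (hES2 : ∀ ψ : Q, ε * ⟪pε, ψ⟫ - b uε ψ = ε * g ψ)
    (hS1 : ∀ φ : V, ⟪uS, φ⟫ + b φ pS = f φ)
    (hS2 : ∀ ψ : Q, b uS ψ = 0) :
    ‖uε - uS‖ ≤ (Real.sqrt ε / 2) * (‖pS‖ + ‖g‖) :=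
  epsStokes_velocity_rate_general b ε hε f g uε pε uS pS hES1 hES2 hS1 hS2
end

section
/- Assume the Nečas-type inf-sup bound with seminorm N and constant c_N. Let ε > 0, f ∈ V*, g ∈ Q*, let (u_ε, p_ε) ∈ V × Q solve the ε-Stokes system ES(ε), and let (u_S, p_S) ∈ V × Q solve the Stokes system S (same f). Then N(p_ε − p_S) ≤ c_N·(√ε/2)·(‖p_S‖_Q + ‖g‖_{Q*}). (Pressure estimate of Theorem 4.4.) -/
/-!
Subtracting the two systems, the velocity error `e = uε - uS` and pressure error `q = pε - pS`
satisfy `⟪e, φ⟫ + b φ q = 0` for all `φ`. Hence `b(·, q) = -⟪e, ·⟫`, so `‖b(·, q)‖ = ‖e‖`, and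
testing with `φ = e` gives the energy identity `‖e‖² = ε (g q - ⟪pS, q⟫ - ‖q‖²)`, whose right side
is at most `ε (M ‖q‖ - ‖q‖²) ≤ ε M² / 4` with `M = ‖pS‖ + ‖g‖`. The inf-sup bound turns
`‖e‖ ≤ √ε M / 2` into the pressure estimate.
-/

open scoped RealInnerProductSpace

theorem le_sqrt_mul_half_of_sq_le_mul_sub_sq {x ε M t : ℝ} (hε : 0 ≤ ε) (hM : 0 ≤ M)
    (h : x ^ 2 ≤ ε * (M * t - t ^ 2)) : x ≤ Real.sqrt ε * (M / 2) := by
  refine le_of_sq_le_sq ?_ (by positivity)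
  rw [mul_pow, Real.sq_sqrt hε]
  nlinarith [mul_nonneg hε (sq_nonneg (t - M / 2))]

section SaddlePoint

variable {V Q : Type*} [SeminormedAddCommGroup V] [InnerProductSpace ℝ V]
  [SeminormedAddCommGroup Q] [InnerProductSpace ℝ Q] (b : V →L[ℝ] Q →L[ℝ] ℝ)

theorem inner_sub_add_apply_sub_eq_zero {u₁ u₂ : V} {p₁ p₂ : Q} {f : V → ℝ}
    (h₁ : ∀ φ, ⟪u₁, φ⟫ + b φ p₁ = f φ) (h₂ : ∀ φ, ⟪u₂, φ⟫ + b φ p₂ = f φ) (φ : V) :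
    ⟪u₁ - u₂, φ⟫ + b φ (p₁ - p₂) = 0 := by
  rw [inner_sub_left, map_sub]
  linear_combination h₁ φ - h₂ φ

theorem norm_flip_eq_of_inner_add_eq_zero {e : V} {q : Q} (h : ∀ φ, ⟪e, φ⟫ + b φ q = 0) :
    ‖b.flip q‖ = ‖e‖ := by
  have hflip : b.flip q = -innerSL ℝ e := by
    ext φ
    simp only [ContinuousLinearMap.flip_apply, neg_apply, innerSL_apply_apply]
    linarith [h φ]
  rw [hflip, norm_neg, innerSL_apply_norm]

theorem epsStokes_energy_identity_s16 {ε : ℝ} {g : Q → ℝ} {uε uS : V} {pε pS : Q}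
    (hmom : ∀ φ, ⟪uε - uS, φ⟫ + b φ (pε - pS) = 0)
    (hES2 : ∀ ψ, ε * ⟪pε, ψ⟫ - b uε ψ = ε * g ψ) (hS2 : ∀ ψ, b uS ψ = 0) :
    ‖uε - uS‖ ^ 2 = ε * (g (pε - pS) - ⟪pS, pε - pS⟫ - ‖pε - pS‖ ^ 2) := by
  set q := pε - pS
  have hpε : ⟪pε, q⟫ = ‖q‖ ^ 2 + ⟪pS, q⟫ := by
    rw [← real_inner_self_eq_norm_sq, ← inner_add_left, sub_add_cancel]
  have hb : b (uε - uS) q = b uε q := by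
    rw [b.map_sub, sub_apply, hS2, sub_zero]
  have he := hmom (uε - uS)
  rw [real_inner_self_eq_norm_sq, hb] at he
  linear_combination he + hES2 q - ε * hpε

theorem epsStokes_velocity_error_sq_le {ε : ℝ} (hε : 0 ≤ ε) {g : Q →L[ℝ] ℝ} {uε uS : V}
    {pε pS : Q} (hmom : ∀ φ, ⟪uε - uS, φ⟫ + b φ (pε - pS) = 0)
    (hES2 : ∀ ψ, ε * ⟪pε, ψ⟫ - b uε ψ = ε * g ψ) (hS2 : ∀ ψ, b uS ψ = 0) :
    ‖uε - uS‖ ^ 2 ≤ ε * ((‖pS‖ + ‖g‖) * ‖pε - pS‖ - ‖pε - pS‖ ^ 2) := by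
  rw [epsStokes_energy_identity_s16 b hmom hES2 hS2]
  have hg := (le_abs_self _).trans (g.le_opNorm (pε - pS))
  have hpS := neg_le_of_abs_le (abs_real_inner_le_norm pS (pε - pS))
  gcongr
  linarith

end SaddlePoint

theorem epsStokes_pressure_rate_general {V Q : Type*}
    [NormedAddCommGroup V] [InnerProductSpace ℝ V]
    [NormedAddCommGroup Q] [InnerProductSpace ℝ Q]
    (b : V →L[ℝ] Q →L[ℝ] ℝ)
    (N : Seminorm ℝ Q) (cN : ℝ) (hcN : 0 < cN)
    (hNecas : ∀ q : Q, N q ≤ cN * ‖b.flip q‖)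
    (ε : ℝ) (hε : 0 < ε) (f : V →L[ℝ] ℝ) (g : Q →L[ℝ] ℝ)
    (uε : V) (pε : Q) (uS : V) (pS : Q)
    (hES1 : ∀ φ : V, ⟪uε, φ⟫ + b φ pε = f φ)
    (hES2 : ∀ ψ : Q, ε * ⟪pε, ψ⟫ - b uε ψ = ε * g ψ)
    (hS1 : ∀ φ : V, ⟪uS, φ⟫ + b φ pS = f φ)
    (hS2 : ∀ ψ : Q, b uS ψ = 0) :
    N (pε - pS) ≤ cN * (Real.sqrt ε / 2) * (‖pS‖ + ‖g‖) := by
  have hmom := inner_sub_add_apply_sub_eq_zero b hES1 hS1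
  have hvel : ‖uε - uS‖ ≤ Real.sqrt ε * ((‖pS‖ + ‖g‖) / 2) :=
    le_sqrt_mul_half_of_sq_le_mul_sub_sq hε.le (by positivity)
      (epsStokes_velocity_error_sq_le b hε.le hmom hES2 hS2)
  calc N (pε - pS) ≤ cN * ‖b.flip (pε - pS)‖ := hNecas _
    _ = cN * ‖uε - uS‖ := by rw [norm_flip_eq_of_inner_add_eq_zero b hmom]
    _ ≤ cN * (Real.sqrt ε * ((‖pS‖ + ‖g‖) / 2)) := by gcongr
    _ = cN * (Real.sqrt ε / 2) * (‖pS‖ + ‖g‖) := by ring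

/-- Pressure estimate of Theorem 4.4: under the Nečas-type inf-sup bound,
`N(p_ε − p_S) ≤ c_N (√ε/2)(‖p_S‖ + ‖g‖)`. -/
theorem epsStokes_pressure_rate {V Q : Type*}
    [NormedAddCommGroup V] [InnerProductSpace ℝ V] [CompleteSpace V]
    [NormedAddCommGroup Q] [InnerProductSpace ℝ Q] [CompleteSpace Q]
    (b : V →L[ℝ] Q →L[ℝ] ℝ)
    (N : Seminorm ℝ Q) (cN : ℝ) (hcN : 0 < cN)
    (hNecas : ∀ q : Q, N q ≤ cN * ‖b.flip q‖)
    (ε : ℝ) (hε : 0 < ε) (f : V →L[ℝ] ℝ) (g : Q →L[ℝ] ℝ)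
    (uε : V) (pε : Q) (uS : V) (pS : Q)
    (hES1 : ∀ φ : V, ⟪uε, φ⟫ + b φ pε = f φ)
    (hES2 : ∀ ψ : Q, ε * ⟪pε, ψ⟫ - b uε ψ = ε * g ψ)
    (hS1 : ∀ φ : V, ⟪uS, φ⟫ + b φ pS = f φ)
    (hS2 : ∀ ψ : Q, b uS ψ = 0) :
    N (pε - pS) ≤ cN * (Real.sqrt ε / 2) * (‖pS‖ + ‖g‖) :=
  epsStokes_pressure_rate_general b N cN hcN hNecas ε hε f g uε pε uS pS hES1 hES2 hS1 hS2
end
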